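/- Let Ω ⊂ ℝ^d be bounded measurable and consider a sequence of partitions and face volumes as above, with the uniform bounds: |D^m_{ij}| ≤ θ min(|K^m_i|, |K^m_j|), each cell index appears in at most N faces, Σ |D^m_{ij}| ≤ |Ω|, adjacency cl(K^m_i) ∩ cl(K^m_j) ≠ ∅, and h_m → 0. Then for any fixed u ∈ L¹(Ω), lim_{m→∞} T_m(u) = 0, where T_m(u) = Σ_{(i,j)∈E^m} |D^m_{ij}| |u_{K^m_i} − u_{K^m_j}|. -/

import Mathlib

open MeasureTheory Filter

private lemma avg_abs_sub_le {X : Type*} [MeasurableSpace X] {μ : Measure X}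
    {s : Set X} (hpos : 0 < μ s) (htop : μ s ≠ ⊤)
    {f g : X → ℝ} (hf : IntegrableOn f s μ) (hg : IntegrableOn g s μ) :
    |(⨍ x in s, f x ∂μ) - ⨍ x in s, g x ∂μ| ≤ (μ s).toReal⁻¹ * ∫ x in s, |f x - g x| ∂μ := by
  rw [setAverage_eq, setAverage_eq, smul_eq_mul, smul_eq_mul, ← mul_sub,
    ← integral_sub hf hg, abs_mul, abs_of_nonneg (by positivity), measureReal_def]
  gcongr
  calc |∫ x in s, (f x - g x) ∂μ| ≤ ∫ x in s, ‖f x - g x‖ ∂μ :=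
        by simpa [Real.norm_eq_abs] using norm_integral_le_integral_norm (μ := μ.restrict s) (fun x => f x - g x)
    _ = ∫ x in s, |f x - g x| ∂μ := by simp [Real.norm_eq_abs]

private lemma avg_sub_const_le {X : Type*} [MeasurableSpace X] {μ : Measure X}
    {s : Set X} (hpos : 0 < μ s) (htop : μ s ≠ ⊤)
    {f : X → ℝ} (hf : IntegrableOn f s μ) {c C : ℝ} (hC0 : 0 ≤ C)
    (hC : ∀ x ∈ s, |f x - c| ≤ C) :
    |(⨍ x in s, f x ∂μ) - c| ≤ C := by
  have h0 : (μ s).toReal ≠ 0 := by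
    simp [ENNReal.toReal_eq_zero_iff, hpos.ne', htop]
  have hcint : IntegrableOn (fun _ : X => c) s μ :=
    integrableOn_const htop
  have key : (⨍ x in s, f x ∂μ) - c = (μ s).toReal⁻¹ * ∫ x in s, (f x - c) ∂μ := by
    rw [integral_sub hf hcint, setAverage_eq, smul_eq_mul, setIntegral_const, smul_eq_mul,
      mul_sub, measureReal_def, inv_mul_cancel_left₀ h0]
  rw [key, abs_mul, abs_of_nonneg (by positivity)]
  have hb : ‖∫ x in s, (f x - c) ∂μ‖ ≤ C * (μ s).toReal :=
    norm_setIntegral_le_of_norm_le_const_ae' htop.lt_top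
      (Filter.Eventually.of_forall fun x hx => by
        simpa [Real.norm_eq_abs] using hC x hx)
  calc (μ s).toReal⁻¹ * |∫ x in s, (f x - c) ∂μ|
      ≤ (μ s).toReal⁻¹ * (C * (μ s).toReal) := by
        gcongr
        simpa [Real.norm_eq_abs] using hb
    _ = C := by field_simp

/-- for a fixed `u ∈ L¹(Ω)` and a regular sequence of meshes with size
tending to zero, the discrete translation functional `T_m(u)` tends to zero. -/
theorem stmt_9 {d : ℕ} {ι : Type*} [DecidableEq ι]
    (Ω : Set (EuclideanSpace ℝ (Fin d)))
    (hΩm : MeasurableSet Ω) (hΩb : Bornology.IsBounded Ω)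
    (I : ℕ → Finset ι) (K : ℕ → ι → Set (EuclideanSpace ℝ (Fin d)))
    (hKm : ∀ m, ∀ i ∈ I m, MeasurableSet (K m i))
    (hcover : ∀ m, (⋃ i ∈ I m, K m i) = Ω)
    (hdisj : ∀ m, ∀ i ∈ I m, ∀ j ∈ I m, i ≠ j → Disjoint (K m i) (K m j))
    (hK0 : ∀ m, ∀ i ∈ I m, 0 < volume (K m i))
    (h : ℕ → ℝ) (hh0 : ∀ m, 0 ≤ h m)
    (hdiam : ∀ m, ∀ i ∈ I m, Metric.diam (K m i) ≤ h m)
    (hlim : Tendsto h atTop (nhds 0))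
    (E : ℕ → Finset (ι × ι)) (hE : ∀ m, ∀ p ∈ E m, p.1 ∈ I m ∧ p.2 ∈ I m)
    (Dv : ℕ → ι × ι → Set (EuclideanSpace ℝ (Fin d)))
    (hDΩ : ∀ m, ∀ p ∈ E m, Dv m p ⊆ Ω)
    (hDm : ∀ m, ∀ p ∈ E m, MeasurableSet (Dv m p))
    (hDsum : ∀ m, ∑ p ∈ E m, (volume (Dv m p)).toReal ≤ (volume Ω).toReal)
    (hadj : ∀ m, ∀ p ∈ E m, (closure (K m p.1) ∩ closure (K m p.2)).Nonempty)
    (θ : ℝ) (hθ : 0 ≤ θ)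
    (hDv : ∀ m, ∀ p ∈ E m, (volume (Dv m p)).toReal
        ≤ θ * min (volume (K m p.1)).toReal (volume (K m p.2)).toReal)
    (N : ℕ)
    (hdeg : ∀ m, ∀ i ∈ I m, ((E m).filter (fun p => p.1 = i ∨ p.2 = i)).card ≤ N)
    (u : EuclideanSpace ℝ (Fin d) → ℝ) (hu : IntegrableOn u Ω)
    (T : ℕ → ℝ)
    (hT : ∀ m, T m = ∑ p ∈ E m,
        (volume (Dv m p)).toReal
          * |(⨍ x in K m p.1, u x) - ⨍ x in K m p.2, u x|) :
    Tendsto T atTop (nhds 0) := by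
  have hΩfin : volume Ω < ⊤ := hΩb.measure_lt_top
  set u' : EuclideanSpace ℝ (Fin d) → ℝ := Ω.indicator u with hu'def
  have hu'int : Integrable u' volume := (integrable_indicator_iff hΩm).2 hu
  rw [Metric.tendsto_atTop]
  intro ε hε
  set εa : ℝ := ε / (8 * (θ * N + 1)) with hεa
  set εb : ℝ := ε / (8 * ((volume Ω).toReal + 1)) with hεb
  have hvolΩ : 0 ≤ (volume Ω).toReal := ENNReal.toReal_nonneg
  have hεa0 : 0 < εa := by rw [hεa]; positivity
  have hεb0 : 0 < εb := by rw [hεb]; positivity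
  obtain ⟨φ, φcs, φnear, φcont, φint⟩ := hu'int.exists_hasCompactSupport_integral_sub_le hεa0
  have φuc : UniformContinuous φ := φcs.uniformContinuous_of_continuous φcont
  obtain ⟨δ, hδ0, hδφ⟩ := Metric.uniformContinuous_iff.1 φuc εb hεb0
  obtain ⟨M, hM⟩ := Metric.tendsto_atTop.1 hlim δ hδ0
  refine ⟨M, fun m hm => ?_⟩
  have hmδ : h m < δ := by
    have := hM m hm
    rwa [Real.dist_eq, sub_zero, abs_of_nonneg (hh0 m)] at this
  -- per-mesh facts
  have hKsub : ∀ i ∈ I m, K m i ⊆ Ω := fun i hi => by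
    rw [← hcover m]; exact Set.subset_biUnion_of_mem hi
  have hKtop : ∀ i ∈ I m, volume (K m i) ≠ ⊤ :=
    fun i hi => ((measure_mono (hKsub i hi)).trans_lt hΩfin).ne
  have hKb : ∀ i ∈ I m, Bornology.IsBounded (K m i) :=
    fun i hi => hΩb.subset (hKsub i hi)
  have φintOn : ∀ i ∈ I m, IntegrableOn φ (K m i) volume :=
    fun i _ => (φcont.integrable_of_hasCompactSupport φcs).integrableOn
  have huOn : ∀ i ∈ I m, IntegrableOn u (K m i) volume :=
    fun i hi => hu.mono_set (hKsub i hi)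
  set F : ι → ℝ := fun i => ∫ x in K m i, |u x - φ x| with hF
  have hF0 : ∀ i, 0 ≤ F i := fun i => by
    rw [hF]; exact integral_nonneg fun x => abs_nonneg _
  have hgint : IntegrableOn (fun x => |u x - φ x|) Ω volume :=
    (hu.sub φint.integrableOn).abs
  -- L¹ bound on |u - φ| over Ω
  have hgΩ0 : 0 ≤ ∫ x in Ω, |u x - φ x| := integral_nonneg fun x => abs_nonneg _
  have hgΩ : ∫ x in Ω, |u x - φ x| ≤ εa := by
    have h1 : ∫ x in Ω, |u x - φ x| = ∫ x in Ω, ‖u' x - φ x‖ := by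
      refine setIntegral_congr_fun hΩm fun x hx => ?_
      simp [hu'def, Set.indicator_of_mem hx, Real.norm_eq_abs]
    rw [h1]
    refine le_trans (setIntegral_le_integral ((hu'int.sub φint).norm) ?_) φnear
    exact Filter.Eventually.of_forall fun x => norm_nonneg _
  -- per-edge estimate
  have key : ∀ p ∈ E m, (volume (Dv m p)).toReal
      * |(⨍ x in K m p.1, u x) - ⨍ x in K m p.2, u x|
      ≤ θ * F p.1 + θ * F p.2 + (volume (Dv m p)).toReal * (2 * εb) := by
    intro p hp
    obtain ⟨hi, hj⟩ := hE m p hp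
    have hDnn : 0 ≤ (volume (Dv m p)).toReal := ENNReal.toReal_nonneg
    have hVi : 0 < (volume (K m p.1)).toReal :=
      ENNReal.toReal_pos (hK0 m _ hi).ne' (hKtop _ hi)
    have hVj : 0 < (volume (K m p.2)).toReal :=
      ENNReal.toReal_pos (hK0 m _ hj).ne' (hKtop _ hj)
    obtain ⟨z, hzi, hzj⟩ := hadj m p hp
    have havg : ∀ k, k ∈ I m → z ∈ closure (K m k) → |(⨍ x in K m k, φ x) - φ z| ≤ εb := by
      intro k hk hz
      refine avg_sub_const_le (hK0 m _ hk) (hKtop _ hk) (φintOn _ hk) hεb0.le fun x hx => ?_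
      have hd : dist x z ≤ Metric.diam (K m k) := by
        have := Metric.dist_le_diam_of_mem (hKb _ hk).closure (subset_closure hx) hz
        rwa [Metric.diam_closure] at this
      have hd2 : dist x z < δ := lt_of_le_of_lt (hd.trans (hdiam m _ hk)) hmδ
      have := hδφ hd2
      rw [Real.dist_eq] at this
      exact this.le
    have hφij : |(⨍ x in K m p.1, φ x) - ⨍ x in K m p.2, φ x| ≤ 2 * εb := by
      calc |(⨍ x in K m p.1, φ x) - ⨍ x in K m p.2, φ x|
          ≤ |(⨍ x in K m p.1, φ x) - φ z| + |φ z - ⨍ x in K m p.2, φ x| :=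
            abs_sub_le _ _ _
        _ ≤ εb + εb := add_le_add (havg _ hi hzi) (by
              rw [abs_sub_comm]; exact havg _ hj hzj)
        _ = 2 * εb := by ring
    have hAi : |(⨍ x in K m p.1, u x) - ⨍ x in K m p.1, φ x|
        ≤ (volume (K m p.1)).toReal⁻¹ * F p.1 := by
      rw [hF]
      exact avg_abs_sub_le (hK0 m _ hi) (hKtop _ hi) (huOn _ hi) (φintOn _ hi)
    have hAj : |(⨍ x in K m p.2, φ x) - ⨍ x in K m p.2, u x|
        ≤ (volume (K m p.2)).toReal⁻¹ * F p.2 := by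
      rw [abs_sub_comm, hF]
      exact avg_abs_sub_le (hK0 m _ hj) (hKtop _ hj) (huOn _ hj) (φintOn _ hj)
    have tri : |(⨍ x in K m p.1, u x) - ⨍ x in K m p.2, u x|
        ≤ (volume (K m p.1)).toReal⁻¹ * F p.1 + 2 * εb
          + (volume (K m p.2)).toReal⁻¹ * F p.2 := by
      calc |(⨍ x in K m p.1, u x) - ⨍ x in K m p.2, u x|
          ≤ |(⨍ x in K m p.1, u x) - ⨍ x in K m p.1, φ x|
            + |(⨍ x in K m p.1, φ x) - ⨍ x in K m p.2, u x| := abs_sub_le _ _ _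
        _ ≤ |(⨍ x in K m p.1, u x) - ⨍ x in K m p.1, φ x|
            + (|(⨍ x in K m p.1, φ x) - ⨍ x in K m p.2, φ x|
              + |(⨍ x in K m p.2, φ x) - ⨍ x in K m p.2, u x|) := by
            gcongr
            exact abs_sub_le _ _ _
        _ ≤ (volume (K m p.1)).toReal⁻¹ * F p.1 + (2 * εb
              + (volume (K m p.2)).toReal⁻¹ * F p.2) := by
            gcongr
        _ = _ := by ring
    have e1 : (volume (Dv m p)).toReal * ((volume (K m p.1)).toReal⁻¹ * F p.1)
        ≤ θ * F p.1 := by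
      have hD1 : (volume (Dv m p)).toReal ≤ θ * (volume (K m p.1)).toReal :=
        (hDv m p hp).trans (mul_le_mul_of_nonneg_left (min_le_left _ _) hθ)
      calc (volume (Dv m p)).toReal * ((volume (K m p.1)).toReal⁻¹ * F p.1)
          ≤ θ * (volume (K m p.1)).toReal * ((volume (K m p.1)).toReal⁻¹ * F p.1) :=
            mul_le_mul_of_nonneg_right hD1
              (mul_nonneg (inv_nonneg.2 hVi.le) (hF0 _))
        _ = θ * F p.1 := by field_simp
    have e2 : (volume (Dv m p)).toReal * ((volume (K m p.2)).toReal⁻¹ * F p.2)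
        ≤ θ * F p.2 := by
      have hD2 : (volume (Dv m p)).toReal ≤ θ * (volume (K m p.2)).toReal :=
        (hDv m p hp).trans (mul_le_mul_of_nonneg_left (min_le_right _ _) hθ)
      calc (volume (Dv m p)).toReal * ((volume (K m p.2)).toReal⁻¹ * F p.2)
          ≤ θ * (volume (K m p.2)).toReal * ((volume (K m p.2)).toReal⁻¹ * F p.2) :=
            mul_le_mul_of_nonneg_right hD2
              (mul_nonneg (inv_nonneg.2 hVj.le) (hF0 _))
        _ = θ * F p.2 := by field_simp
    calc (volume (Dv m p)).toReal * |(⨍ x in K m p.1, u x) - ⨍ x in K m p.2, u x|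
        ≤ (volume (Dv m p)).toReal * ((volume (K m p.1)).toReal⁻¹ * F p.1 + 2 * εb
            + (volume (K m p.2)).toReal⁻¹ * F p.2) :=
          mul_le_mul_of_nonneg_left tri hDnn
      _ = (volume (Dv m p)).toReal * ((volume (K m p.1)).toReal⁻¹ * F p.1)
          + (volume (Dv m p)).toReal * ((volume (K m p.2)).toReal⁻¹ * F p.2)
          + (volume (Dv m p)).toReal * (2 * εb) := by ring
      _ ≤ θ * F p.1 + θ * F p.2 + (volume (Dv m p)).toReal * (2 * εb) := by
          gcongr
  -- counting lemma
  have hcount : ∀ pr : ι × ι → ι, (∀ p ∈ E m, pr p ∈ I m) →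
      (∀ p, pr p = p.1 ∨ pr p = p.2) →
      ∑ p ∈ E m, F (pr p) ≤ (N : ℝ) * ∑ i ∈ I m, F i := by
    intro pr hmem hfs
    rw [← Finset.sum_fiberwise_of_maps_to hmem (fun p => F (pr p)), Finset.mul_sum]
    refine Finset.sum_le_sum fun i hi => ?_
    have hcard : ((E m).filter fun p => pr p = i).card ≤ N := by
      refine le_trans (Finset.card_le_card ?_) (hdeg m i hi)
      intro p hp
      rw [Finset.mem_filter] at hp ⊢
      refine ⟨hp.1, ?_⟩
      rcases hfs p with h1 | h1
      · exact Or.inl (h1 ▸ hp.2)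
      · exact Or.inr (h1 ▸ hp.2)
    calc ∑ p ∈ (E m).filter (fun p => pr p = i), F (pr p)
        = ∑ _p ∈ (E m).filter (fun p => pr p = i), F i := by
          refine Finset.sum_congr rfl fun p hp => ?_
          rw [(Finset.mem_filter.1 hp).2]
      _ = (((E m).filter fun p => pr p = i).card : ℝ) * F i := by
          rw [Finset.sum_const, nsmul_eq_mul]
      _ ≤ (N : ℝ) * F i :=
          mul_le_mul_of_nonneg_right (Nat.cast_le.2 hcard) (hF0 i)
  have hsum1 : ∑ p ∈ E m, F p.1 ≤ (N : ℝ) * ∑ i ∈ I m, F i :=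
    hcount Prod.fst (fun p hp => (hE m p hp).1) (fun p => Or.inl rfl)
  have hsum2 : ∑ p ∈ E m, F p.2 ≤ (N : ℝ) * ∑ i ∈ I m, F i :=
    hcount Prod.snd (fun p hp => (hE m p hp).2) (fun p => Or.inr rfl)
  have hsumF : ∑ i ∈ I m, F i = ∫ x in Ω, |u x - φ x| := by
    rw [← hcover m]
    exact (integral_biUnion_finset (I m) (fun i hi => hKm m i hi)
      (fun i hi j hj hij => hdisj m i hi j hj hij)
      (fun i hi => hgint.mono_set (hKsub i hi))).symm
  -- assemble
  have hTnn : 0 ≤ T m := by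
    rw [hT m]
    exact Finset.sum_nonneg fun p _ =>
      mul_nonneg ENNReal.toReal_nonneg (abs_nonneg _)
  have hTle : T m ≤ θ * ((N : ℝ) * εa) + θ * ((N : ℝ) * εa)
      + (volume Ω).toReal * (2 * εb) := by
    rw [hT m]
    calc ∑ p ∈ E m, (volume (Dv m p)).toReal
          * |(⨍ x in K m p.1, u x) - ⨍ x in K m p.2, u x|
        ≤ ∑ p ∈ E m, (θ * F p.1 + θ * F p.2
            + (volume (Dv m p)).toReal * (2 * εb)) := Finset.sum_le_sum key
      _ = θ * (∑ p ∈ E m, F p.1) + θ * (∑ p ∈ E m, F p.2)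
          + (∑ p ∈ E m, (volume (Dv m p)).toReal) * (2 * εb) := by
          rw [Finset.sum_add_distrib, Finset.sum_add_distrib, ← Finset.mul_sum,
            ← Finset.mul_sum, ← Finset.sum_mul]
      _ ≤ θ * ((N : ℝ) * ∑ i ∈ I m, F i) + θ * ((N : ℝ) * ∑ i ∈ I m, F i)
          + (volume Ω).toReal * (2 * εb) := by
          gcongr
          exact hDsum m
      _ ≤ θ * ((N : ℝ) * εa) + θ * ((N : ℝ) * εa) + (volume Ω).toReal * (2 * εb) := by
          gcongr <;> rw [hsumF] <;> exact hgΩ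
  -- final arithmetic
  have hANe : θ * (N : ℝ) * εa ≤ ε / 8 := by
    have h8 : εa * (8 * (θ * (N : ℝ) + 1)) = ε := by
      rw [hεa]; field_simp
    nlinarith [hεa0.le, mul_nonneg hθ (Nat.cast_nonneg N : (0:ℝ) ≤ N)]
  have hVe : (volume Ω).toReal * εb ≤ ε / 8 := by
    have h8 : εb * (8 * ((volume Ω).toReal + 1)) = ε := by
      rw [hεb]; field_simp
    nlinarith [hεb0.le, hvolΩ]
  have : T m ≤ ε / 2 := by nlinarith [hTle, hANe, hVe]
  rw [Real.dist_eq, sub_zero, abs_of_nonneg hTnn]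
  linarith
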